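/- arXiv:0911.0317 — 9 statements merged into one kernel-verified Lean document; each statement's English description precedes it below -/
import Mathlib

section
/- Let 0 < α < 1 and μ = 5/(1-α) > 4. If f is a continuous function on [0, Y) with f(0)=f'(0)=f''(0)=f'''(0)=f⁽⁴⁾(0)=0 satisfying the integral equation f(y) = ∫₀^y ∫₀^{s₄} ∫₀^{s₃} ∫₀^{s₂} ∫₀^{s₁} |f(r)|^{α-1} f(r) dr ds₁ ds₂ ds₃ ds₄, then the function φ(y) = f(y)/y^μ is uniformly bounded on (0, Y). -/
open Set intervalIntegral Filter Topology
open scoped Nat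

/-!
The nonlinearity `g(t) = |t|^(α-1) t` satisfies `|g(t)| ≤ |t|^α`, so a bound `|f r| ≤ K r^β`
fed through the `m`-fold integral improves to `|f r| ≤ (K^α / m!) r^(αβ + m)`. Starting from a
uniform bound `K₀` and iterating, the exponents `μ (1 - αⁿ)` increase to `μ = m / (1 - α)`, while
the constants `c (K₀ / c)^(αⁿ)` converge to the positive fixed point `c` of `K ↦ K^α / m!`.
In the limit `|f y| ≤ c y^μ`.
-/

noncomputable def primitive (u : ℝ → ℝ) (y : ℝ) : ℝ := ∫ r in (0 : ℝ)..y, u r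

section Primitive

variable {u : ℝ → ℝ} {a K β : ℝ}

lemma continuousOn_primitive (ha : 0 ≤ a) (hu : ContinuousOn u (Icc 0 a)) :
    ContinuousOn (primitive u) (Icc 0 a) := by
  rw [← uIcc_of_le ha] at hu ⊢
  exact continuousOn_primitive_interval hu.integrableOn_Icc

lemma abs_primitive_le (hβ : 0 ≤ β) (hu : ContinuousOn u (Icc 0 a))
    (hb : ∀ r ∈ Icc 0 a, |u r| ≤ K * r ^ β) {y : ℝ} (hy : y ∈ Icc 0 a) :
    |primitive u y| ≤ K / (β + 1) * y ^ (β + 1) := by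
  have hsub : Icc 0 y ⊆ Icc 0 a := Icc_subset_Icc le_rfl hy.2
  have hu_int : IntervalIntegrable (fun r => |u r|) MeasureTheory.volume 0 y :=
    ((hu.mono hsub).abs).intervalIntegrable_of_Icc hy.1
  have hpow_int : IntervalIntegrable (fun r => K * r ^ β) MeasureTheory.volume 0 y :=
    (continuousOn_const.mul (continuousOn_id.rpow_const fun _ _ => Or.inr hβ)).intervalIntegrable
  calc |primitive u y| ≤ ∫ r in (0 : ℝ)..y, |u r| := abs_integral_le_integral_abs hy.1
    _ ≤ ∫ r in (0 : ℝ)..y, K * r ^ β :=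
        integral_mono_on hy.1 hu_int hpow_int fun r hr => hb r (hsub hr)
    _ = K / (β + 1) * y ^ (β + 1) := by
        rw [integral_const_mul, integral_rpow (Or.inl (by linarith)),
          Real.zero_rpow (by linarith)]
        ring

lemma abs_iterate_primitive_le (ha : 0 ≤ a) (hK : 0 ≤ K) (hβ : 0 ≤ β)
    (hu : ContinuousOn u (Icc 0 a)) (hb : ∀ r ∈ Icc 0 a, |u r| ≤ K * r ^ β) (n : ℕ) :
    ContinuousOn (primitive^[n] u) (Icc 0 a) ∧
      ∀ y ∈ Icc 0 a, |primitive^[n] u y| ≤ K / n ! * y ^ (β + n) := by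
  induction n with
  | zero => exact ⟨hu, by simpa using hb⟩
  | succ n ih =>
    obtain ⟨hcont, hbound⟩ := ih
    rw [Function.iterate_succ_apply']
    refine ⟨continuousOn_primitive ha hcont, fun y hy => ?_⟩
    have hβn : 0 ≤ β + n := by positivity
    refine (abs_primitive_le hβn hcont hbound hy).trans ?_
    have hconst : K / n ! / (β + n + 1) ≤ K / (n + 1) ! := by
      rw [div_div, Nat.factorial_succ, Nat.cast_mul, mul_comm]
      refine div_le_div_of_nonneg_left hK (by positivity) ?_
      gcongr
      push_cast
      linarith
    push_cast
    rw [← add_assoc]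
    exact mul_le_mul_of_nonneg_right hconst (Real.rpow_nonneg hy.1 _)

end Primitive

lemma abs_abs_rpow_sub_one_mul_self {α : ℝ} (hα : 0 < α) (t : ℝ) :
    |(|t| ^ (α - 1) * t)| = |t| ^ α := by
  rcases eq_or_ne t 0 with rfl | ht
  · simp [Real.zero_rpow hα.ne']
  · rw [abs_mul, abs_of_nonneg (Real.rpow_nonneg (abs_nonneg t) _),
      ← Real.rpow_add_one (abs_ne_zero.2 ht), sub_add_cancel]

lemma continuous_abs_rpow_sub_one_mul_self {α : ℝ} (hα : 0 < α) :
    Continuous fun t : ℝ => |t| ^ (α - 1) * t := by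
  refine continuous_iff_continuousAt.2 fun t => ?_
  rcases eq_or_ne t 0 with rfl | ht
  · have habs : Tendsto (fun t : ℝ => |t| ^ α) (𝓝 0) (𝓝 0) := by
      simpa [Function.comp_def, Real.zero_rpow hα.ne'] using
        (Real.continuous_rpow_const hα.le).continuousAt.tendsto.comp (continuous_abs.tendsto 0)
    have h := squeeze_zero_norm (f := fun t : ℝ => |t| ^ (α - 1) * t)
      (fun t => (abs_abs_rpow_sub_one_mul_self hα t).le) habs
    simpa [ContinuousAt] using h
  · exact (continuous_abs.continuousAt.rpow_const (Or.inl (abs_ne_zero.2 ht))).mul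
      continuousAt_id

lemma exists_pos_rpow_div_eq_self {α q : ℝ} (hα : α < 1) (hq : 0 < q) :
    ∃ c > 0, c ^ α / q = c := by
  have hexp : (1 - α)⁻¹ = α * (1 - α)⁻¹ + 1 := by
    field_simp [(sub_pos.2 hα).ne']
    ring
  refine ⟨q⁻¹ ^ (1 - α)⁻¹, by positivity, ?_⟩
  rw [← Real.rpow_mul (by positivity), mul_comm, div_eq_mul_inv]
  conv_rhs => rw [hexp, Real.rpow_add_one (by positivity)]

section Bootstrap

variable {f g : ℝ → ℝ} {α a : ℝ} {m : ℕ}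

lemma abs_le_of_eq_iterate_primitive_of_abs_le (hα : 0 < α) (ha : 0 ≤ a)
    (hg : Continuous g) (hgf : ∀ t, |g t| ≤ |t| ^ α) (hf : ContinuousOn f (Icc 0 a))
    (heq : ∀ y ∈ Icc 0 a, f y = primitive^[m] (g ∘ f) y) {K β : ℝ} (hK : 0 ≤ K)
    (hβ : 0 ≤ β) (hb : ∀ r ∈ Icc 0 a, |f r| ≤ K * r ^ β) :
    ∀ r ∈ Icc 0 a, |f r| ≤ K ^ α / m ! * r ^ (α * β + m) := by
  have hgb : ∀ r ∈ Icc 0 a, |(g ∘ f) r| ≤ K ^ α * r ^ (α * β) := fun r hr =>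
    calc |g (f r)| ≤ |f r| ^ α := hgf (f r)
      _ ≤ (K * r ^ β) ^ α := Real.rpow_le_rpow (abs_nonneg _) (hb r hr) hα.le
      _ = K ^ α * r ^ (α * β) := by
        rw [Real.mul_rpow hK (Real.rpow_nonneg hr.1 _), ← Real.rpow_mul hr.1, mul_comm β]
  intro r hr
  rw [heq r hr]
  exact (abs_iterate_primitive_le ha (by positivity) (by positivity)
    (hg.comp_continuousOn hf) hgb m).2 r hr

lemma abs_le_of_eq_iterate_primitive_pow (hα : 0 < α) (hα1 : α < 1) (ha : 0 ≤ a)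
    (hg : Continuous g) (hgf : ∀ t, |g t| ≤ |t| ^ α) (hf : ContinuousOn f (Icc 0 a))
    (heq : ∀ y ∈ Icc 0 a, f y = primitive^[m] (g ∘ f) y) {μ c K : ℝ}
    (hμ : μ * (1 - α) = m) (hc : 0 < c) (hcfix : c ^ α / m ! = c) (hK : 0 ≤ K)
    (hfK : ∀ r ∈ Icc 0 a, |f r| ≤ K) (n : ℕ) :
    ∀ r ∈ Icc 0 a, |f r| ≤ c * (K / c) ^ (α ^ n) * r ^ (μ * (1 - α ^ n)) := by
  induction n with
  | zero => simpa [mul_div_cancel₀ K hc.ne'] using hfK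
  | succ n ih =>
    have hμ0 : 0 ≤ μ := by
      have : 0 < 1 - α := by linarith
      nlinarith [(Nat.cast_nonneg m : (0 : ℝ) ≤ m)]
    have hpow : α ^ n ≤ 1 := pow_le_one₀ hα.le hα1.le
    have hstep := abs_le_of_eq_iterate_primitive_of_abs_le hα ha hg hgf hf heq
      (by positivity) (mul_nonneg hμ0 (sub_nonneg.2 hpow)) ih
    have hconst : (c * (K / c) ^ α ^ n) ^ α / m ! = c * (K / c) ^ α ^ (n + 1) := by
      rw [Real.mul_rpow hc.le (by positivity), ← Real.rpow_mul (by positivity), mul_div_right_comm,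
        hcfix, pow_succ]
    have hexp : α * (μ * (1 - α ^ n)) + m = μ * (1 - α ^ (n + 1)) := by
      rw [← hμ]
      ring
    rwa [hconst, hexp] at hstep

theorem abs_le_mul_rpow_of_eq_iterate_primitive (hα : 0 < α) (hα1 : α < 1) (ha : 0 ≤ a)
    (hg : Continuous g) (hgf : ∀ t, |g t| ≤ |t| ^ α) (hf : ContinuousOn f (Icc 0 a))
    (heq : ∀ y ∈ Icc 0 a, f y = primitive^[m] (g ∘ f) y) {μ c : ℝ}
    (hμ : μ * (1 - α) = m) (hc : 0 < c) (hcfix : c ^ α / m ! = c) {y : ℝ} (hy : y ∈ Ioc 0 a) :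
    |f y| ≤ c * y ^ μ := by
  obtain ⟨M, hM⟩ := isCompact_Icc.exists_bound_of_continuousOn hf
  set K := max M 1
  have hK : 0 < K := lt_max_of_lt_right one_pos
  have hbound n := abs_le_of_eq_iterate_primitive_pow hα hα1 ha hg hgf hf heq hμ hc hcfix hK.le
    (fun r hr => (hM r hr).trans (le_max_left _ _)) n y (Ioc_subset_Icc_self hy)
  have hlim : Tendsto (fun n : ℕ => c * (K / c) ^ (α ^ n) * y ^ (μ * (1 - α ^ n))) atTop
      (𝓝 (c * y ^ μ)) := by
    have hcont : ContinuousAt (fun s : ℝ => c * (K / c) ^ s * y ^ (μ * (1 - s))) 0 :=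
      (continuousAt_const.mul (Real.continuousAt_const_rpow (by positivity))).mul
        ((Real.continuousAt_const_rpow hy.1.ne').comp (by fun_prop))
    simpa [Function.comp_def] using hcont.tendsto.comp (tendsto_pow_atTop_nhds_zero_of_lt_one hα.le hα1)
  exact ge_of_tendsto' hlim hbound

end Bootstrap

theorem stmt3_general (α μ Y : ℝ) (f : ℝ → ℝ)
    (hα : α ∈ Ioo (0 : ℝ) 1) (hμ : μ = 5 / (1 - α))
    (hcont : ContinuousOn f (Ico 0 Y))
    (hint : ∀ y ∈ Ico (0 : ℝ) Y,
      f y = ∫ s₄ in (0 : ℝ)..y, ∫ s₃ in (0 : ℝ)..s₄, ∫ s₂ in (0 : ℝ)..s₃,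
        ∫ s₁ in (0 : ℝ)..s₂, ∫ r in (0 : ℝ)..s₁, |f r| ^ (α - 1) * f r) :
    ∃ C : ℝ, ∀ y ∈ Ioo (0 : ℝ) Y, |f y / y ^ μ| ≤ C := by
  obtain ⟨hα0, hα1⟩ := hα
  obtain ⟨c, hc, hcfix⟩ := exists_pos_rpow_div_eq_self hα1 (Nat.cast_pos.2 (Nat.factorial_pos 5))
  have hμ5 : μ * (1 - α) = (5 : ℕ) := by
    rw [hμ]
    field_simp [(sub_pos.2 hα1).ne']
    norm_num
  refine ⟨c, fun y ⟨hy0, hyY⟩ => ?_⟩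
  have hfy := abs_le_mul_rpow_of_eq_iterate_primitive (m := 5) hα0 hα1 hy0.le
    (continuous_abs_rpow_sub_one_mul_self hα0)
    (fun t => (abs_abs_rpow_sub_one_mul_self hα0 t).le)
    (hcont.mono (Icc_subset_Ico_right hyY)) (fun r hr => hint r ⟨hr.1, hr.2.trans_lt hyY⟩)
    hμ5 hc hcfix ⟨hy0, le_rfl⟩
  have hyμ : 0 < y ^ μ := Real.rpow_pos_of_pos hy0 μ
  rwa [abs_div, abs_of_pos hyμ, div_le_iff₀ hyμ]

/-- Maximal regularity: for `0 < α < 1`, `μ = 5/(1-α) > 4`, if a continuous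
`f` on `[0,Y)` has vanishing data at `0` and satisfies the quintuple
integral equation corresponding to `f⁽⁵⁾ = |f|^{α-1} f`, then
`φ(y) = f(y)/y^μ` is uniformly bounded on `(0,Y)`. -/
theorem stmt3 (α μ Y : ℝ) (f : ℝ → ℝ)
    (hα : α ∈ Ioo (0 : ℝ) 1) (hμ : μ = 5 / (1 - α)) (hμ4 : 4 < μ) (hY : 0 < Y)
    (hcont : ContinuousOn f (Ico 0 Y))
    (hdata : ∀ j ≤ 4, iteratedDeriv j f 0 = 0)
    (hint : ∀ y ∈ Ico (0 : ℝ) Y,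
      f y = ∫ s₄ in (0 : ℝ)..y, ∫ s₃ in (0 : ℝ)..s₄, ∫ s₂ in (0 : ℝ)..s₃,
        ∫ s₁ in (0 : ℝ)..s₂, ∫ r in (0 : ℝ)..s₁, |f r| ^ (α - 1) * f r) :
    ∃ C : ℝ, ∀ y ∈ Ioo (0 : ℝ) Y, |f y / y ^ μ| ≤ C :=
  stmt3_general α μ Y f hα hμ hcont hint
end

section
/- Let 0 ≤ α < 1 and μ = 5/(1-α) ≥ 4. If f : [0,∞) → ℝ is continuous, f̄(y) = sup_{z ∈ [0,y]} |f(z)|, and there are constants C₀,...,C₄ ≥ 0 with f̄(y) ≤ C₀ + C₁y + C₂y² + C₃y³ + C₄y⁴ + (1/5!) y⁵ f̄(y)^α for all y ≥ 0, then there exist constants C₀', C* > 0 (with C* depending only on α) such that f̄(y) ≤ C₀' + C* y^{5/(1-α)} for all y ≥ 0. -/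
open Set

/- The sub-linear term `y⁵ f̄(y)^α / 5!` can be absorbed: from `F ≤ A + B F^α` with `α < 1`
either `F ≤ (2B)^{1/(1-α)}` or `B F^α ≤ F/2`, so `F ≤ 2A + (2B)^{1/(1-α)}`. With `B ∼ y⁵` this
gives the growth `y^{5/(1-α)}`, and since `5/(1-α) ≥ 5` the quartic part `A` is dominated by
`y^{5/(1-α)}` once `y` exceeds a constant depending only on the `Cᵢ`. -/

/-- The running supremum of `|f|` on `[0,y]`. -/
noncomputable def runSup (f : ℝ → ℝ) (y : ℝ) : ℝ :=
  sSup ((fun z => |f z|) '' Set.Icc 0 y)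

lemma le_two_mul_add_rpow_of_le_add_mul_rpow {α A B F : ℝ} (hα : α < 1) (hA : 0 ≤ A)
    (hB : 0 ≤ B) (h : F ≤ A + B * F ^ α) :
    F ≤ 2 * A + (2 * B) ^ (1 / (1 - α)) := by
  have h1α : 0 < 1 - α := by linarith
  set G := (2 * B) ^ (1 / (1 - α))
  have hG : 0 ≤ G := by positivity
  rcases le_or_gt F G with hFG | hGF
  · linarith
  have hFpos : 0 < F := hG.trans_lt hGF
  have hGpow : G ^ (1 - α) = 2 * B := by
    rw [← Real.rpow_mul (by positivity), one_div_mul_cancel h1α.ne', Real.rpow_one]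
  have hBF : 2 * B * F ^ α < F :=
    calc 2 * B * F ^ α < F ^ (1 - α) * F ^ α := by
          gcongr
          rw [← hGpow]
          exact Real.rpow_lt_rpow hG hGF h1α
      _ = F := by rw [← Real.rpow_add hFpos, sub_add_cancel, Real.rpow_one]
  linarith

lemma pow_le_one_add_pow {y : ℝ} (hy : 0 ≤ y) {i n : ℕ} (hin : i ≤ n) : y ^ i ≤ 1 + y ^ n := by
  rcases le_total y 1 with hy1 | hy1
  · linarith [pow_le_one₀ hy hy1 (n := i), pow_nonneg hy n]
  · linarith [pow_le_pow_right₀ hy1 hin]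

lemma sum_mul_pow_le_sum_mul_one_add_pow {n : ℕ} (C : Fin (n + 1) → ℝ) (hC : ∀ i, 0 ≤ C i)
    {y : ℝ} (hy : 0 ≤ y) : ∑ i, C i * y ^ (i : ℕ) ≤ (∑ i, C i) * (1 + y ^ n) := by
  rw [Finset.sum_mul]
  gcongr with i
  · exact hC i
  · exact pow_le_one_add_pow hy (Nat.lt_succ_iff.mp i.isLt)

/-- Beyond `y = c + 1`, the factor `c` is dominated by `y ≤ y ^ (μ - n)`. -/
lemma mul_pow_le_add_rpow {c y μ : ℝ} (hc : 0 ≤ c) (hy : 0 ≤ y) {n : ℕ} (hμ : n + 1 ≤ μ) :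
    c * y ^ n ≤ c * (c + 1) ^ n + y ^ μ := by
  rcases le_or_gt y (c + 1) with hyc | hcy
  · have : c * y ^ n ≤ c * (c + 1) ^ n := by gcongr
    linarith [Real.rpow_nonneg hy μ]
  have hy1 : 1 ≤ y := by linarith
  have hyμ : y ^ μ = y ^ (μ - n) * y ^ n := by
    rw [← Real.rpow_natCast, ← Real.rpow_add (by linarith), sub_add_cancel]
  have hc_le : c ≤ y ^ (μ - n) :=
    calc c ≤ y := by linarith
      _ = y ^ (1 : ℝ) := (Real.rpow_one y).symm
      _ ≤ y ^ (μ - n) := Real.rpow_le_rpow_of_exponent_le hy1 (by linarith)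
  have : c * y ^ n ≤ y ^ μ := by rw [hyμ]; gcongr
  linarith [mul_nonneg hc (pow_nonneg (by linarith : (0 : ℝ) ≤ c + 1) n)]

theorem stmt4_general (α : ℝ) (hα : α ∈ Ico (0 : ℝ) 1) :
    ∃ Cstar : ℝ, 0 < Cstar ∧
      ∀ (f : ℝ → ℝ) (C₀ C₁ C₂ C₃ C₄ : ℝ), Continuous f →
        0 ≤ C₀ → 0 ≤ C₁ → 0 ≤ C₂ → 0 ≤ C₃ → 0 ≤ C₄ →
        (∀ y : ℝ, 0 ≤ y → runSup f y ≤
          C₀ + C₁ * y + C₂ * y ^ 2 + C₃ * y ^ 3 + C₄ * y ^ 4 +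
            (1 / 120) * y ^ 5 * (runSup f y) ^ α) →
        ∃ C₀' : ℝ, 0 < C₀' ∧
          ∀ y : ℝ, 0 ≤ y → runSup f y ≤ C₀' + Cstar * y ^ (5 / (1 - α)) := by
  obtain ⟨hα0, hα1⟩ := hα
  have hμ : (4 : ℕ) + 1 ≤ 5 / (1 - α) := by
    rw [le_div_iff₀ (by linarith)]; push_cast; nlinarith
  refine ⟨(1 / 60) ^ (1 / (1 - α)) + 1, by positivity, ?_⟩
  intro f C₀ C₁ C₂ C₃ C₄ _ hC₀ hC₁ hC₂ hC₃ hC₄ hbd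
  set S := C₀ + C₁ + C₂ + C₃ + C₄
  have hS : 0 ≤ S := by positivity
  refine ⟨2 * S * (1 + (2 * S + 1) ^ 4) + 1, by positivity, fun y hy => ?_⟩
  have hquartic : C₀ + C₁ * y + C₂ * y ^ 2 + C₃ * y ^ 3 + C₄ * y ^ 4 ≤ S * (1 + y ^ 4) := by
    simpa [Fin.sum_univ_five, S] using sum_mul_pow_le_sum_mul_one_add_pow ![C₀, C₁, C₂, C₃, C₄]
      (fun i => by fin_cases i <;> assumption) hy
  have habsorb := le_two_mul_add_rpow_of_le_add_mul_rpow (A := S * (1 + y ^ 4))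
    (B := 1 / 120 * y ^ 5) hα1 (by positivity) (by positivity)
    ((hbd y hy).trans (by gcongr))
  have hgrowth : (2 * (1 / 120 * y ^ 5)) ^ (1 / (1 - α)) =
      (1 / 60) ^ (1 / (1 - α)) * y ^ (5 / (1 - α)) := by
    rw [← mul_assoc, Real.mul_rpow (by norm_num) (by positivity), ← Real.rpow_natCast_mul hy,
      Nat.cast_ofNat, mul_one_div (5 : ℝ)]
    norm_num
  have hdominate := mul_pow_le_add_rpow (mul_nonneg zero_le_two hS) hy hμ
  rw [hgrowth] at habsorb
  linarith

/-- Dissipativity estimate: for `0 ≤ α < 1` with `μ = 5/(1-α) ≥ 4`, there is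
a constant `C*` depending only on `α` such that any continuous `f` whose
running supremum `f̄` satisfies
`f̄(y) ≤ C₀ + C₁ y + C₂ y² + C₃ y³ + C₄ y⁴ + y⁵ f̄(y)^α / 5!` obeys
`f̄(y) ≤ C₀' + C* y^{5/(1-α)}`. -/
theorem stmt4 (α : ℝ) (hα : α ∈ Ico (0 : ℝ) 1) (hμ : 4 ≤ 5 / (1 - α)) :
    ∃ Cstar : ℝ, 0 < Cstar ∧
      ∀ (f : ℝ → ℝ) (C₀ C₁ C₂ C₃ C₄ : ℝ), Continuous f →
        0 ≤ C₀ → 0 ≤ C₁ → 0 ≤ C₂ → 0 ≤ C₃ → 0 ≤ C₄ →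
        (∀ y : ℝ, 0 ≤ y → runSup f y ≤
          C₀ + C₁ * y + C₂ * y ^ 2 + C₃ * y ^ 3 + C₄ * y ^ 4 +
            (1 / 120) * y ^ 5 * (runSup f y) ^ α) →
        ∃ C₀' : ℝ, 0 < C₀' ∧
          ∀ y : ℝ, 0 ≤ y → runSup f y ≤ C₀' + Cstar * y ^ (5 / (1 - α)) :=
  stmt4_general α hα
end

section
/- The polynomial a₁(μ) = 5μ⁴ - 40μ³ + 105μ² - 100μ + 24 has exactly two real roots in the interval (1, 3), one root μ₁⁻ in (1.45, 1.46) and one root μ₁⁺ in (2.54, 2.55), and a₁(μ) > 0 for μ ∈ (μ₁⁻, μ₁⁺); moreover a₃(μ) = 5(2μ²-8μ+7) < 0 for all μ ∈ (μ₁⁻, μ₁⁺). -/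
open Set

/-- Root localization: `a₁(μ) = 5μ⁴-40μ³+105μ²-100μ+24` has exactly two
roots in `(1,3)`, `μ₁⁻ ∈ (1.45,1.46)` and `μ₁⁺ ∈ (2.54,2.55)`, `a₁ > 0` on
`(μ₁⁻,μ₁⁺)`, and `a₃(μ) = 5(2μ²-8μ+7) < 0` there. -/
theorem stmt9 :
    ∃ μ₁m ∈ Ioo (1.45 : ℝ) 1.46, ∃ μ₁p ∈ Ioo (2.54 : ℝ) 2.55,
      5 * μ₁m ^ 4 - 40 * μ₁m ^ 3 + 105 * μ₁m ^ 2 - 100 * μ₁m + 24 = 0 ∧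
      5 * μ₁p ^ 4 - 40 * μ₁p ^ 3 + 105 * μ₁p ^ 2 - 100 * μ₁p + 24 = 0 ∧
      (∀ μ ∈ Ioo (1 : ℝ) 3,
        5 * μ ^ 4 - 40 * μ ^ 3 + 105 * μ ^ 2 - 100 * μ + 24 = 0 →
          μ = μ₁m ∨ μ = μ₁p) ∧
      (∀ μ ∈ Ioo μ₁m μ₁p,
        0 < 5 * μ ^ 4 - 40 * μ ^ 3 + 105 * μ ^ 2 - 100 * μ + 24 ∧
        5 * (2 * μ ^ 2 - 8 * μ + 7) < 0) := by
  set q : ℝ := Real.sqrt 145 with hqdef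
  have hq2 : q ^ 2 = 145 := Real.sq_sqrt (by norm_num)
  have hqlb : 12.04 < q := by
    have : (12.04 : ℝ) = Real.sqrt (12.04 ^ 2) := by
      rw [Real.sqrt_sq (by norm_num)]
    rw [this, hqdef]
    exact Real.sqrt_lt_sqrt (by positivity) (by norm_num)
  have hqub : q < 12.042 := by
    have : (12.042 : ℝ) = Real.sqrt (12.042 ^ 2) := by
      rw [Real.sqrt_sq (by norm_num)]
    rw [this, hqdef]
    exact Real.sqrt_lt_sqrt (by norm_num) (by norm_num)
  set s : ℝ := (15 - q) / 10 with hsdef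
  have hs : 5 * s ^ 2 - 15 * s + 4 = 0 := by
    rw [hsdef]; field_simp; nlinarith [hq2]
  have hslb : 0.2958 < s := by rw [hsdef]; linarith
  have hsub : s < 0.296 := by rw [hsdef]; linarith
  have hs0 : (0 : ℝ) ≤ s := by linarith
  set r : ℝ := Real.sqrt s with hrdef
  have hr2 : r ^ 2 = s := Real.sq_sqrt hs0
  have hr0 : 0 ≤ r := Real.sqrt_nonneg _
  have hrlb : 0.54 < r := by nlinarith [hr2]
  have hrub : r < 0.55 := by nlinarith [hr2]
  refine ⟨2 - r, ⟨by linarith, by linarith⟩, 2 + r, ⟨by linarith, by linarith⟩, ?_, ?_, ?_, ?_⟩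
  · linear_combination hs + (5 * r ^ 2 + 5 * s - 15) * hr2
  · linear_combination hs + (5 * r ^ 2 + 5 * s - 15) * hr2
  · rintro μ ⟨h1, h3⟩ hroot
    have hfac : ((μ - 2) ^ 2 - s) * ((μ - 2) ^ 2 - (3 - s)) = 0 := by
      linear_combination (1/5) * hroot - (1/5) * hs
    have hne : (μ - 2) ^ 2 - (3 - s) ≠ 0 := by nlinarith
    have hu : (μ - 2) ^ 2 = s := by
      have := (mul_eq_zero.mp hfac).resolve_right hne
      linarith
    have hfac2 : (μ - (2 - r)) * (μ - (2 + r)) = 0 := by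
      linear_combination hu - hr2
    rcases mul_eq_zero.mp hfac2 with h | h
    · exact Or.inl (by linarith)
    · exact Or.inr (by linarith)
  · rintro μ ⟨h1, h3⟩
    have hu : (μ - 2) ^ 2 < s := by nlinarith [hr2]
    constructor
    · have hA : 0 < s - (μ - 2) ^ 2 := by linarith
      have hB : 0 < (3 - s) - (μ - 2) ^ 2 := by nlinarith
      nlinarith [mul_pos hA hB, hs]
    · nlinarith
end

section
/- Let 0 < α < 1 and y₀ ∈ ℝ, and consider the fifth-order ODE f⁽⁵⁾ = ±|f|^{α-1}f with initial data f⁽ʲ⁾(y₀) = α_j, j = 0,...,4. If Σ_{j=0}^4 |α_j| > 0, then the initial value problem has at most one C⁵ solution on some neighbourhood of y₀. -/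
open Set Filter Topology
open scoped Pointwise Nat

/-!
Suppose the `n`-jets of two solutions agree at `x` and `j < n` is the lowest order with
`g⁽ʲ⁾(x) ≠ 0`, say `> 0`. Then both solutions are `≥ c (t - x)ʲ` just right of `x`, where
`s ↦ |s|^{α-1} s` is Lipschitz with constant `≍ (t - x)^{j(α-1)}`. As `n + j(α-1) > 0`,
integrating the difference `n` times from `x` turns a bound `M (t - x)ⁿ` into `M/2 (t - x)ⁿ` on a
short interval, so the difference vanishes; `t ↦ -t` gives the left side. A solution whose jet
vanishes at some point stays `O(|t - x|)` in all derivatives, so nontrivial data at `y₀` exclude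
such points near `y₀`, and the set where the two jets agree is open, closed and nonempty there.
-/

noncomputable def signedRpow (α s : ℝ) : ℝ := |s| ^ (α - 1) * s

lemma signedRpow_neg (α s : ℝ) : signedRpow α (-s) = -signedRpow α s := by
  simp [signedRpow]

lemma signedRpow_of_pos {α s : ℝ} (hs : 0 < s) : signedRpow α s = s ^ α := by
  rw [signedRpow, abs_of_pos hs, ← Real.rpow_add_one hs.ne', sub_add_cancel]

lemma abs_signedRpow {α : ℝ} (hα : α ≠ 0) (s : ℝ) : |signedRpow α s| = |s| ^ α := by
  rcases eq_or_ne s 0 with rfl | hs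
  · simp [signedRpow, Real.zero_rpow hα]
  · rw [signedRpow, abs_mul, abs_of_nonneg (by positivity), ← Real.rpow_add_one (abs_ne_zero.2 hs),
      sub_add_cancel]

lemma continuous_signedRpow {α : ℝ} (hα : 0 < α) : Continuous (signedRpow α) := by
  refine continuous_iff_continuousAt.2 fun s => ?_
  rcases eq_or_ne s 0 with rfl | hs
  · have h : Tendsto (fun s : ℝ => |s| ^ α) (𝓝 0) (𝓝 0) := by
      simpa [Real.zero_rpow hα.ne'] using
        (continuous_abs.rpow_const fun _ => Or.inr hα.le).tendsto (0 : ℝ)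
    simpa [ContinuousAt, signedRpow] using
      squeeze_zero_norm (fun s => (abs_signedRpow hα.ne' s).le) h
  · exact (continuous_abs.continuousAt.rpow_const (Or.inl (abs_ne_zero.2 hs))).mul continuousAt_id

lemma abs_signedRpow_sub_signedRpow_le {α m a b : ℝ} (hα₀ : 0 ≤ α) (hα₁ : α ≤ 1) (hm : 0 < m)
    (ha : m ≤ a) (hb : m ≤ b) :
    |signedRpow α a - signedRpow α b| ≤ α * m ^ (α - 1) * |a - b| := by
  have hderiv : ∀ s ∈ Ici m, HasDerivWithinAt (fun s => s ^ α) (α * s ^ (α - 1)) (Ici m) s :=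
    fun s hs => (Real.hasDerivAt_rpow_const (Or.inl (hm.trans_le hs).ne')).hasDerivWithinAt
  have hbound : ∀ s ∈ Ici m, ‖α * s ^ (α - 1)‖ ≤ α * m ^ (α - 1) := fun s hs => by
    have hs₀ : 0 < s := hm.trans_le hs
    rw [Real.norm_eq_abs, abs_of_nonneg (by positivity)]
    exact mul_le_mul_of_nonneg_left (Real.rpow_le_rpow_of_nonpos hm hs (by linarith)) hα₀
  rw [signedRpow_of_pos (hm.trans_le ha), signedRpow_of_pos (hm.trans_le hb)]
  exact (convex_Ici m).norm_image_sub_le_of_norm_hasDerivWithin_le hderiv hbound hb ha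

lemma abs_signedRpow_sub_signedRpow_le_of_mul_pow_le {α c τ a b : ℝ} {j : ℕ} (hα₀ : 0 ≤ α)
    (hα₁ : α ≤ 1) (hc : 0 < c) (hτ : 0 < τ) (ha : c * τ ^ j ≤ a) (hb : c * τ ^ j ≤ b) :
    |signedRpow α a - signedRpow α b| ≤ α * c ^ (α - 1) * τ ^ ((j : ℝ) * (α - 1)) * |a - b| := by
  have h := abs_signedRpow_sub_signedRpow_le hα₀ hα₁ (by positivity) ha hb
  rwa [Real.mul_rpow hc.le (by positivity), ← Real.rpow_natCast, ← Real.rpow_mul hτ.le,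
    ← mul_assoc] at h

lemma rpow_le_self_add_one {x α : ℝ} (hx : 0 ≤ x) (hα₀ : 0 ≤ α) (hα₁ : α ≤ 1) :
    x ^ α ≤ x + 1 := by
  rcases le_total x 1 with h | h
  · linarith [Real.rpow_le_one hx h hα₀]
  · linarith [Real.rpow_le_self_of_one_le h hα₁]

lemma abs_le_mul_rpow_of_abs_deriv_le {u u' : ℝ → ℝ} {x z C γ : ℝ} (hC : 0 ≤ C) (hγ : 0 ≤ γ)
    (hu : ∀ t ∈ Icc x z, HasDerivAt u (u' t) t) (hx : u x = 0)
    (hu' : ∀ t ∈ Icc x z, |u' t| ≤ C * (t - x) ^ γ) :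
    ∀ t ∈ Icc x z, |u t| ≤ C * (t - x) ^ (γ + 1) := by
  have hB : ∀ t, HasDerivAt (fun t => C * (t - x) ^ (γ + 1)) (C * ((γ + 1) * (t - x) ^ γ)) t :=
    fun t => by
      simpa using ((Real.hasDerivAt_rpow_const (p := γ + 1) (Or.inr (by linarith))).comp t
        ((hasDerivAt_id t).sub_const x)).const_mul C
  refine image_norm_le_of_norm_deriv_right_le_deriv_boundary
    (fun t ht => (hu t ht).continuousAt.continuousWithinAt)
    (fun t ht => (hu t (Ico_subset_Icc_self ht)).hasDerivWithinAt)
    (by simp [hx, Real.zero_rpow (by linarith : γ + 1 ≠ 0)]) hB fun t ht => ?_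
  have ht₀ : 0 ≤ t - x := sub_nonneg.2 ht.1
  calc ‖u' t‖ ≤ C * (t - x) ^ γ := hu' t (Ico_subset_Icc_self ht)
    _ ≤ C * ((γ + 1) * (t - x) ^ γ) := by
      gcongr; exact le_mul_of_one_le_left (by positivity) (by linarith)

lemma abs_le_mul_rpow_of_abs_iteratedDeriv_le {D : ℕ → ℝ → ℝ} {x z C γ : ℝ} (hC : 0 ≤ C)
    (hγ : 0 ≤ γ) (k : ℕ) (hD : ∀ i < k, ∀ t ∈ Icc x z, HasDerivAt (D i) (D (i + 1) t) t)
    (h0 : ∀ i < k, D i x = 0) (hk : ∀ t ∈ Icc x z, |D k t| ≤ C * (t - x) ^ γ) :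
    ∀ t ∈ Icc x z, |D 0 t| ≤ C * (t - x) ^ (γ + k) := by
  induction k generalizing D with
  | zero => simpa using hk
  | succ k ih =>
    have h1 := ih (D := fun i => D (i + 1)) (fun i hi => hD (i + 1) (by omega))
      (fun i hi => h0 (i + 1) (by omega)) hk
    intro t ht
    simpa [add_assoc] using abs_le_mul_rpow_of_abs_deriv_le hC (by positivity)
      (hD 0 (by omega)) (h0 0 (by omega)) h1 t ht

lemma mul_pow_le_of_le_iteratedDeriv {g : ℕ → ℝ → ℝ} {x z v : ℝ} (j : ℕ)
    (hg : ∀ i < j, ∀ t ∈ Icc x z, HasDerivAt (g i) (g (i + 1) t) t) (h0 : ∀ i < j, g i x = 0)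
    (hj : ∀ t ∈ Icc x z, v ≤ g j t) : ∀ t ∈ Icc x z, v / j ! * (t - x) ^ j ≤ g 0 t := by
  induction j generalizing g with
  | zero => simpa using hj
  | succ j ih =>
    have h1 := ih (g := fun i => g (i + 1)) (fun i hi => hg (i + 1) (by omega))
      (fun i hi => h0 (i + 1) (by omega)) hj
    have hW : ∀ t, HasDerivAt (fun t => v / (j + 1)! * (t - x) ^ (j + 1))
        (v / j ! * (t - x) ^ j) t := fun t => by
      refine ((((hasDerivAt_id t).sub_const x).pow (j + 1)).const_mul (v / (j + 1)!)).congr_deriv ?_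
      simp only [id, Nat.factorial_succ]; push_cast; field_simp
    exact image_le_of_deriv_right_le_deriv_boundary
      (fun t _ => (hW t).continuousAt.continuousWithinAt) (fun t _ => (hW t).hasDerivWithinAt)
      (by simp [h0 0 (by omega)])
      (fun t ht => (hg 0 (by omega) t ht).continuousAt.continuousWithinAt)
      (fun t ht => (hg 0 (by omega) t (Ico_subset_Icc_self ht)).hasDerivWithinAt)
      (fun t ht => h1 t (Ico_subset_Icc_self ht))

lemma eqOn_zero_of_bound_halves {A : Set ℝ} {u w : ℝ → ℝ} {B : ℝ} (hB₀ : 0 ≤ B)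
    (hB : ∀ t ∈ A, |u t| ≤ B * w t)
    (hhalf : ∀ M, 0 ≤ M → (∀ t ∈ A, |u t| ≤ M * w t) → ∀ t ∈ A, |u t| ≤ M / 2 * w t) :
    EqOn u 0 A := by
  have hk : ∀ k : ℕ, ∀ t ∈ A, |u t| ≤ B * (1 / 2) ^ k * w t := by
    intro k
    induction k with
    | zero => simpa using hB
    | succ k ih =>
      intro t ht
      have := hhalf _ (by positivity) ih t ht
      rwa [pow_succ, ← mul_assoc, mul_one_div]
  intro t ht
  have hlim : Tendsto (fun k : ℕ => B * (1 / 2) ^ k * w t) atTop (𝓝 0) := by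
    simpa using ((tendsto_pow_atTop_nhds_zero_of_lt_one (by norm_num)
      (by norm_num : (1 / 2 : ℝ) < 1)).const_mul B).mul_const (w t)
  exact abs_nonpos_iff.1 (ge_of_tendsto' hlim fun k => hk k t ht)

lemma eqOn_zero_of_abs_iteratedDeriv_le_rpow_mul {D : ℕ → ℝ → ℝ} {x z L β : ℝ} {n : ℕ}
    (hL : 0 ≤ L) (hβ : 0 < β + n)
    (hD : ∀ i < n, ∀ t ∈ Icc x z, HasDerivAt (D i) (D (i + 1) t) t) (h0 : ∀ i < n, D i x = 0)
    (hcont : ContinuousOn (D n) (Icc x z))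
    (hlip : ∀ t ∈ Icc x z, |D n t| ≤ L * (t - x) ^ β * |D 0 t|)
    (hsmall : ∀ t ∈ Icc x z, L * (t - x) ^ (β + n) ≤ 1 / 2) :
    EqOn (D 0) 0 (Icc x z) := by
  obtain ⟨C, hC⟩ := isCompact_Icc.exists_bound_of_continuousOn hcont
  refine eqOn_zero_of_bound_halves (w := fun t => (t - x) ^ (n : ℝ)) (le_max_right C 0) ?_ ?_
  · simpa using abs_le_mul_rpow_of_abs_iteratedDeriv_le (le_max_right C 0) le_rfl n hD h0
      fun t ht => by simpa using (hC t ht).trans (le_max_left C 0)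
  intro M hM hbound t ht
  have hn : ∀ s ∈ Icc x z, |D n s| ≤ L * M * (s - x) ^ (β + n) := fun s hs => by
    have hs₀ : 0 ≤ s - x := sub_nonneg.2 hs.1
    calc |D n s| ≤ L * (s - x) ^ β * |D 0 s| := hlip s hs
      _ ≤ L * (s - x) ^ β * (M * (s - x) ^ (n : ℝ)) := by gcongr; exact hbound s hs
      _ = L * M * (s - x) ^ (β + n) := by rw [Real.rpow_add' hs₀ hβ.ne']; ring
  have ht₀ : 0 ≤ t - x := sub_nonneg.2 ht.1
  calc |D 0 t| ≤ L * M * (t - x) ^ (β + n + n) :=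
        abs_le_mul_rpow_of_abs_iteratedDeriv_le (by positivity) hβ.le n hD h0 hn t ht
    _ = L * (t - x) ^ (β + n) * (M * (t - x) ^ (n : ℝ)) := by
        rw [Real.rpow_add' ht₀ (by positivity)]; ring
    _ ≤ 1 / 2 * (M * (t - x) ^ (n : ℝ)) := by gcongr; exact hsmall t ht
    _ = M / 2 * (t - x) ^ (n : ℝ) := by ring

lemma IsPreconnected.eqOn_of_eq_imp_eventuallyEq {X Y : Type*} [TopologicalSpace X]
    [TopologicalSpace Y] [T2Space Y] {s : Set X} {F G : X → Y} (hs : IsPreconnected s)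
    (hso : IsOpen s) (hF : ContinuousOn F s) (hG : ContinuousOn G s)
    (hloc : ∀ x ∈ s, F x = G x → F =ᶠ[𝓝 x] G) {x₀ : X} (hx₀ : x₀ ∈ s) (h₀ : F x₀ = G x₀) :
    EqOn F G s := by
  have hsub : s ⊆ {x | F =ᶠ[𝓝 x] G} :=
    hs.subset_of_closure_inter_subset isOpen_setOfPred_eventually_nhds ⟨x₀, hx₀, hloc x₀ hx₀ h₀⟩
      fun x ⟨hcl, hx⟩ => hloc x hx <| tendsto_nhds_unique_of_frequently_eq
        ((hF x hx).continuousAt (hso.mem_nhds hx)) ((hG x hx).continuousAt (hso.mem_nhds hx))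
        ((mem_closure_iff_frequently.1 hcl).mono fun _ hy => hy.self_of_nhds)
  exact fun x hx => (hsub hx).self_of_nhds

/-- `g 0, …, g n` are the successive derivatives on `s` of a solution of
`u⁽ⁿ⁾ = e |u|^{α-1} u`. -/
structure IsODEJet (n : ℕ) (α e : ℝ) (s : Set ℝ) (g : ℕ → ℝ → ℝ) : Prop where
  hasDerivAt : ∀ i < n, ∀ x ∈ s, HasDerivAt (g i) (g (i + 1) x) x
  eq_signedRpow : ∀ x ∈ s, g n x = e * signedRpow α (g 0 x)

lemma isODEJet_iteratedDerivWithin {n : ℕ} {α e : ℝ} {s : Set ℝ} {f : ℝ → ℝ} (hs : IsOpen s)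
    (hf : ContDiffOn ℝ n f s)
    (hode : ∀ y ∈ s, iteratedDerivWithin n f s y = e * (|f y| ^ (α - 1) * f y)) :
    IsODEJet n α e s fun i => iteratedDerivWithin i f s where
  hasDerivAt i hi x hx := by
    have hd := hf.differentiableOn_iteratedDerivWithin (by exact_mod_cast hi) hs.uniqueDiffOn x hx
    rw [iteratedDerivWithin_succ, derivWithin_of_isOpen hs hx]
    exact (hd.differentiableAt (hs.mem_nhds hx)).hasDerivAt
  eq_signedRpow x hx := by rw [hode x hx, iteratedDerivWithin_zero]; rfl

namespace IsODEJet

variable {n : ℕ} {α e : ℝ} {s : Set ℝ} {g h : ℕ → ℝ → ℝ}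

lemma continuousOn (hg : IsODEJet n α e s g) {i : ℕ} (hi : i < n) : ContinuousOn (g i) s :=
  fun x hx => (hg.hasDerivAt i hi x hx).continuousAt.continuousWithinAt

lemma continuousOn_top (hg : IsODEJet n α e s g) (hn : 0 < n) (hα : 0 < α) :
    ContinuousOn (g n) s :=
  (continuousOn_const.mul ((continuous_signedRpow hα).comp_continuousOn
    (hg.continuousOn hn))).congr hg.eq_signedRpow

lemma neg (hg : IsODEJet n α e s g) : IsODEJet n α e s fun i t => -g i t where
  hasDerivAt i hi x hx := (hg.hasDerivAt i hi x hx).neg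
  eq_signedRpow x hx := by simp [hg.eq_signedRpow x hx, signedRpow_neg]

lemma comp_neg (hg : IsODEJet n α e s g) :
    IsODEJet n α ((-1) ^ n * e) (-s) fun i t => (-1) ^ i * g i (-t) where
  hasDerivAt i hi x hx := by
    refine (((hg.hasDerivAt i hi (-x) hx).comp x (hasDerivAt_neg x)).const_mul
      ((-1) ^ i)).congr_deriv ?_
    rw [pow_succ]; ring
  eq_signedRpow x hx := by simp [hg.eq_signedRpow (-x) hx, mul_assoc]

lemma sum_abs_le_of_forall_eq_zero (hg : IsODEJet n α e s g) (hα₀ : 0 < α) (hα₁ : α ≤ 1)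
    (he : |e| ≤ 1) {x y : ℝ} (hxy : x ≤ y) (hsub : Icc x y ⊆ s) (hn : n * (y - x) ≤ 1 / 2)
    (h0 : ∀ i < n, g i x = 0) :
    ∑ i ∈ Finset.range n, |g i y| ≤ 2 * n * (y - x) := by
  set ψ := fun t => ∑ i ∈ Finset.range n, |g i t|
  have hψ : ContinuousOn ψ (Icc x y) := continuousOn_finsetSum _ fun i hi =>
    ((hg.continuousOn (Finset.mem_range.1 hi)).mono hsub).abs
  obtain ⟨σ, hσ, hmax⟩ := isCompact_Icc.exists_isMaxOn (nonempty_Icc.2 hxy) hψ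
  have hle : ∀ i < n, ∀ t ∈ Icc x y, |g i t| ≤ ψ σ := fun i hi t ht =>
    (Finset.single_le_sum (f := fun i => |g i t|) (fun i _ => abs_nonneg _)
      (Finset.mem_range.2 hi)).trans (hmax ht)
  have hnext : ∀ i < n, ∀ t ∈ Icc x y, |g (i + 1) t| ≤ (ψ σ + 1) * (t - x) ^ (0 : ℝ) := by
    intro i hi t ht
    rw [Real.rpow_zero, mul_one]
    rcases (Nat.succ_le_of_lt hi).lt_or_eq with hi' | rfl
    · linarith [hle (i + 1) hi' t ht]
    · rw [hg.eq_signedRpow t (hsub ht), abs_mul, abs_signedRpow hα₀.ne']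
      calc |e| * |g 0 t| ^ α ≤ 1 * (|g 0 t| + 1) :=
            mul_le_mul he (rpow_le_self_add_one (abs_nonneg _) hα₀.le hα₁) (by positivity)
              zero_le_one
        _ ≤ ψ σ + 1 := by linarith [hle 0 (by omega) t ht]
  have hψσ₀ : 0 ≤ ψ σ := Finset.sum_nonneg fun i _ => abs_nonneg _
  have hσ : ∀ i < n, |g i σ| ≤ (ψ σ + 1) * (y - x) := fun i hi => by
    have := abs_le_mul_rpow_of_abs_deriv_le (by positivity) le_rfl
      (fun t ht => hg.hasDerivAt i hi t (hsub ht)) (h0 i hi) (hnext i hi) σ hσ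
    rw [zero_add, Real.rpow_one] at this
    exact this.trans (by gcongr; exact hσ.2)
  have hψσ : ψ σ ≤ n * ((ψ σ + 1) * (y - x)) := by
    simpa using Finset.sum_le_sum fun i hi => hσ i (Finset.mem_range.1 hi)
  have : ψ σ ≤ 2 * n * (y - x) := by nlinarith
  exact (hmax (right_mem_Icc.2 hxy)).trans this

lemma sum_abs_le_of_forall_eq_zero_uIcc (hg : IsODEJet n α e s g) (hα₀ : 0 < α) (hα₁ : α ≤ 1)
    (he : |e| ≤ 1) {x y : ℝ} (hsub : uIcc x y ⊆ s) (hn : n * |y - x| ≤ 1 / 2)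
    (h0 : ∀ i < n, g i x = 0) :
    ∑ i ∈ Finset.range n, |g i y| ≤ 2 * n * |y - x| := by
  rcases le_total x y with hxy | hyx
  · rw [abs_of_nonneg (sub_nonneg.2 hxy)] at hn ⊢
    exact hg.sum_abs_le_of_forall_eq_zero hα₀ hα₁ he hxy (uIcc_of_le hxy ▸ hsub) hn h0
  · rw [abs_of_nonpos (sub_nonpos.2 hyx)] at hn ⊢
    have hsub' : Icc (-x) (-y) ⊆ -s := fun t ht =>
      hsub (uIcc_of_ge hyx ▸ ⟨by linarith [ht.2], by linarith [ht.1]⟩)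
    simpa [neg_add_eq_sub] using hg.comp_neg.sum_abs_le_of_forall_eq_zero hα₀ hα₁
      (by simpa [abs_mul] using he) (neg_le_neg hyx) hsub' (by linarith) (by simpa using h0)

lemma exists_ne_zero_of_lt_sum_abs (hg : IsODEJet n α e s g) (hα₀ : 0 < α) (hα₁ : α ≤ 1)
    (he : |e| ≤ 1) {x y : ℝ} (hsub : uIcc x y ⊆ s) (hn : n * |y - x| ≤ 1 / 2)
    (hy : 2 * n * |y - x| < ∑ i ∈ Finset.range n, |g i y|) : ∃ i < n, g i x ≠ 0 := by
  by_contra! h0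
  exact (hg.sum_abs_le_of_forall_eq_zero_uIcc hα₀ hα₁ he hsub hn h0).not_gt hy

lemma eventually_div_factorial_mul_pow_le (hg : IsODEJet n α e s g) (hs : IsOpen s) {x v : ℝ}
    (hx : x ∈ s) {j : ℕ} (hj : j < n) (hzero : ∀ i < j, g i x = 0) (hv : v < g j x) :
    ∀ᶠ t in 𝓝[≥] x, v / j ! * (t - x) ^ j ≤ g 0 t := by
  have hU : s ∩ {t | v < g j t} ∈ 𝓝[≥] x := nhdsWithin_le_nhds <| inter_mem (hs.mem_nhds hx)
    ((hg.hasDerivAt j hj x hx).continuousAt.preimage_mem_nhds (Ioi_mem_nhds hv))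
  obtain ⟨u, hxu, hsub⟩ := mem_nhdsGE_iff_exists_Icc_subset.1 hU
  filter_upwards [Icc_mem_nhdsGE hxu] with t ht
  exact mul_pow_le_of_le_iteratedDeriv j
    (fun i hi t ht => hg.hasDerivAt i (hi.trans hj) t (hsub ht).1) hzero
    (fun t ht => (hsub ht).2.le) t ht

lemma eventuallyEq_nhdsGE_of_pos (hg : IsODEJet n α e s g) (hh : IsODEJet n α e s h)
    (hα₀ : 0 < α) (hα₁ : α ≤ 1) (he : |e| ≤ 1) (hs : IsOpen s) {x : ℝ} (hx : x ∈ s)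
    (heq : ∀ i < n, g i x = h i x) {j : ℕ} (hj : j < n) (hzero : ∀ i < j, g i x = 0)
    (hpos : 0 < g j x) : g 0 =ᶠ[𝓝[≥] x] h 0 := by
  set c := g j x / 2 / (j ! : ℝ)
  set L := α * c ^ (α - 1)
  set β : ℝ := j * (α - 1)
  have hc : 0 < c := by positivity
  have hβ : 0 < β + n := by
    have : (j : ℝ) + 1 ≤ n := by exact_mod_cast hj
    nlinarith
  have hsmall : ∀ᶠ t in 𝓝[≥] x, L * (t - x) ^ (β + n) ≤ 1 / 2 := by
    have hcont : ContinuousAt (fun t => L * (t - x) ^ (β + n)) x :=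
      continuousAt_const.mul ((continuousAt_id.sub continuousAt_const).rpow_const (Or.inr hβ.le))
    have : L * (x - x) ^ (β + n) < 1 / 2 := by simp [Real.zero_rpow hβ.ne']
    exact nhdsWithin_le_nhds (hcont.eventually (gt_mem_nhds this) |>.mono fun _ => le_of_lt)
  obtain ⟨u, hxu, hsub⟩ := mem_nhdsGE_iff_exists_Icc_subset.1 <|
    ((hg.eventually_div_factorial_mul_pow_le hs hx hj hzero (half_lt_self hpos)).and
      ((hh.eventually_div_factorial_mul_pow_le hs hx hj
        (fun i hi => heq i (hi.trans hj) ▸ hzero i hi)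
        (v := g j x / 2) (by rw [← heq j hj]; exact half_lt_self hpos)).and hsmall)).and
      (mem_nhdsWithin_of_mem_nhds (hs.mem_nhds hx))
  have hD : EqOn (fun t => g 0 t - h 0 t) 0 (Icc x u) := by
    refine eqOn_zero_of_abs_iteratedDeriv_le_rpow_mul (D := fun i t => g i t - h i t)
      (by positivity) hβ (fun i hi t ht => ?_) (fun i hi => sub_eq_zero.2 (heq i hi))
      (((hg.continuousOn_top (by omega) hα₀).sub (hh.continuousOn_top (by omega) hα₀)).mono
        fun t ht => (hsub ht).2) (fun t ht => ?_) fun t ht => (hsub ht).1.2.2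
    · exact (hg.hasDerivAt i hi t (hsub ht).2).sub (hh.hasDerivAt i hi t (hsub ht).2)
    · obtain ⟨⟨hgt, hht, -⟩, hts⟩ := hsub ht
      simp only [hg.eq_signedRpow t hts, hh.eq_signedRpow t hts, ← mul_sub, abs_mul]
      rcases ht.1.eq_or_lt with rfl | hxt
      · simp [heq 0 (by omega)]
      · calc |e| * |signedRpow α (g 0 t) - signedRpow α (h 0 t)|
            ≤ 1 * |signedRpow α (g 0 t) - signedRpow α (h 0 t)| := by gcongr
          _ ≤ L * (t - x) ^ β * |g 0 t - h 0 t| := by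
            rw [one_mul]
            exact abs_signedRpow_sub_signedRpow_le_of_mul_pow_le hα₀.le hα₁ hc (sub_pos.2 hxt)
              hgt hht
  filter_upwards [Icc_mem_nhdsGE hxu] with t ht
  exact sub_eq_zero.1 (hD ht)

lemma eventuallyEq_nhdsGE (hg : IsODEJet n α e s g) (hh : IsODEJet n α e s h)
    (hα₀ : 0 < α) (hα₁ : α ≤ 1) (he : |e| ≤ 1) (hs : IsOpen s) {x : ℝ} (hx : x ∈ s)
    (heq : ∀ i < n, g i x = h i x) {j : ℕ} (hj : j < n) (hzero : ∀ i < j, g i x = 0)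
    (hne : g j x ≠ 0) : g 0 =ᶠ[𝓝[≥] x] h 0 := by
  rcases hne.lt_or_gt with hneg | hpos
  · have := hg.neg.eventuallyEq_nhdsGE_of_pos hh.neg hα₀ hα₁ he hs hx (by simpa using heq) hj
      (by simpa using hzero) (by simpa using hneg)
    exact this.mono fun t => neg_inj.1
  · exact hg.eventuallyEq_nhdsGE_of_pos hh hα₀ hα₁ he hs hx heq hj hzero hpos

lemma eventuallyEq_nhds (hg : IsODEJet n α e s g) (hh : IsODEJet n α e s h)
    (hα₀ : 0 < α) (hα₁ : α ≤ 1) (he : |e| ≤ 1) (hs : IsOpen s) {x : ℝ} (hx : x ∈ s)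
    (heq : ∀ i < n, g i x = h i x) (hne : ∃ i < n, g i x ≠ 0) :
    ∀ i < n, g i =ᶠ[𝓝 x] h i := by
  classical
  obtain ⟨hj, hgj⟩ := Nat.find_spec hne
  have hzero : ∀ i < Nat.find hne, g i x = 0 := fun i hi => by
    by_contra hi'
    exact Nat.find_min hne hi ⟨hi.trans hj, hi'⟩
  have hright := hg.eventuallyEq_nhdsGE hh hα₀ hα₁ he hs hx heq hj hzero hgj
  have hleft : g 0 =ᶠ[𝓝[≤] x] h 0 := by
    have := hg.comp_neg.eventuallyEq_nhdsGE hh.comp_neg hα₀ hα₁ (by simpa [abs_mul] using he)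
      hs.neg (x := -x) (by simpa using hx) (by simpa using heq) hj (by simpa using hzero)
      (by simpa using hgj)
    filter_upwards [tendsto_neg_nhdsLE.eventually this] with t ht
    simpa using ht
  intro i hi
  induction i with
  | zero => exact eventually_sup.2 ⟨hleft, hright⟩ |>.filter_mono (nhdsLE_sup_nhdsGE x).ge
  | succ i ih =>
    filter_upwards [(ih (by omega)).deriv, hs.mem_nhds hx] with t ht hts
    rw [← (hg.hasDerivAt i (by omega) t hts).deriv, ← (hh.hasDerivAt i (by omega) t hts).deriv, ht]

lemma eqOn_of_isPreconnected (hg : IsODEJet n α e s g) (hh : IsODEJet n α e s h)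
    (hα₀ : 0 < α) (hα₁ : α ≤ 1) (he : |e| ≤ 1) (hs : IsOpen s) (hs' : IsPreconnected s)
    (hn : 0 < n) (hne : ∀ x ∈ s, ∃ i < n, g i x ≠ 0) {x₀ : ℝ} (hx₀ : x₀ ∈ s)
    (h₀ : ∀ i < n, g i x₀ = h i x₀) : EqOn (g 0) (h 0) s := by
  have hFG := hs'.eqOn_of_eq_imp_eventuallyEq hs (F := fun x (i : Fin n) => g i x)
    (G := fun x i => h i x) (continuousOn_pi.2 fun i => hg.continuousOn i.2)
    (continuousOn_pi.2 fun i => hh.continuousOn i.2) (fun x hx hx' => ?_) hx₀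
    (funext fun i => h₀ i i.2)
  · exact fun x hx => congrFun (hFG hx) ⟨0, hn⟩
  · have := hg.eventuallyEq_nhds hh hα₀ hα₁ he hs hx (fun i hi => congrFun hx' ⟨i, hi⟩) (hne x hx)
    exact (eventually_all.2 fun i : Fin n => this i i.2).mono fun _ => funext

end IsODEJet

/-- Uniqueness for the IVP `f⁽⁵⁾ = ±|f|^{α-1}f`, `f⁽ʲ⁾(y₀) = α_j`,
`0 < α < 1`: if not all the `α_j` vanish, there is at most one `C⁵`
solution on some neighbourhood of `y₀`. -/
theorem stmt11 (α y₀ ε : ℝ) (a : Fin 5 → ℝ)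
    (hα : α ∈ Ioo (0 : ℝ) 1) (hε : ε = 1 ∨ ε = -1)
    (ha : 0 < ∑ j : Fin 5, |a j|) :
    ∃ δ > (0 : ℝ), ∀ f₁ f₂ : ℝ → ℝ,
      ContDiffOn ℝ 5 f₁ (Ioo (y₀ - δ) (y₀ + δ)) →
      ContDiffOn ℝ 5 f₂ (Ioo (y₀ - δ) (y₀ + δ)) →
      (∀ y ∈ Ioo (y₀ - δ) (y₀ + δ),
        iteratedDerivWithin 5 f₁ (Ioo (y₀ - δ) (y₀ + δ)) y = ε * (|f₁ y| ^ (α - 1) * f₁ y)) →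
      (∀ y ∈ Ioo (y₀ - δ) (y₀ + δ),
        iteratedDerivWithin 5 f₂ (Ioo (y₀ - δ) (y₀ + δ)) y = ε * (|f₂ y| ^ (α - 1) * f₂ y)) →
      (∀ j : Fin 5, iteratedDerivWithin j f₁ (Ioo (y₀ - δ) (y₀ + δ)) y₀ = a j) →
      (∀ j : Fin 5, iteratedDerivWithin j f₂ (Ioo (y₀ - δ) (y₀ + δ)) y₀ = a j) →
      EqOn f₁ f₂ (Ioo (y₀ - δ) (y₀ + δ)) := by
  set m := ∑ j : Fin 5, |a j|
  -- `5 δ ≤ 1/2` for the extinction estimate, `10 δ ≤ m` to contradict it at `y₀`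
  set δ := min (1 / 10) (m / 10)
  have hδ : 0 < δ := by positivity
  refine ⟨δ, hδ, fun f₁ f₂ hf₁ hf₂ hode₁ hode₂ hinit₁ hinit₂ => ?_⟩
  set I := Ioo (y₀ - δ) (y₀ + δ)
  have he : |ε| ≤ 1 := by rcases hε with rfl | rfl <;> simp
  have hg₁ := isODEJet_iteratedDerivWithin isOpen_Ioo hf₁ hode₁
  have hg₂ := isODEJet_iteratedDerivWithin isOpen_Ioo hf₂ hode₂
  have hy₀ : y₀ ∈ I := ⟨by linarith, by linarith⟩
  have hm : ∑ i ∈ Finset.range 5, |iteratedDerivWithin i f₁ I y₀| = m := by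
    simp [← Fin.sum_univ_eq_sum_range, hinit₁, m]
  have hne : ∀ x ∈ I, ∃ i < 5, iteratedDerivWithin i f₁ I x ≠ 0 := fun x hx => by
    have hdist : |y₀ - x| < δ := by rw [abs_sub_lt_iff]; constructor <;> linarith [hx.1, hx.2]
    refine hg₁.exists_ne_zero_of_lt_sum_abs hα.1 hα.2.le he
      (ordConnected_Ioo.uIcc_subset hx hy₀) ?_ ?_
    · push_cast; linarith [min_le_left (1 / 10 : ℝ) (m / 10)]
    · push_cast; rw [hm]; linarith [min_le_right (1 / 10 : ℝ) (m / 10)]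
  simpa using hg₁.eqOn_of_isPreconnected hg₂ hα.1 hα.2.le he isOpen_Ioo isPreconnected_Ioo
    (by norm_num) hne hy₀ fun i hi => (hinit₁ ⟨i, hi⟩).trans (hinit₂ ⟨i, hi⟩).symm
end

section
/- Let F be a C⁴ even function on [-y₀, y₀] (y₀ > 0), positive on (-y₀, y₀), vanishing together with its first four derivatives at ±y₀, and satisfying |F|^m |F⁽⁵⁾|^n F⁽⁵⁾ + β F y = 0 on (-y₀, y₀) for some β > 0, n ≥ 0, m ∈ ℝ. Then no such F exists. -/
/-!
On `(-y₀, 0)` the term `β F y` is negative, so the equation forces `F⁽⁵⁾ > 0` there. Since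
`F⁽⁴⁾, …, F'` all vanish at `-y₀`, integrating upwards makes each of them positive on
`(-y₀, 0]`; in particular `F'(0) > 0`, whereas `F'(0) = 0` because `F` is even.
-/

open Set

lemma pos_of_mul_rpow_abs_mul_pos {c x n : ℝ} (hc : 0 ≤ c) (h : 0 < c * |x| ^ n * x) :
    0 < x := by
  by_contra! hx
  have : 0 ≤ c * |x| ^ n := mul_nonneg hc (Real.rpow_nonneg (abs_nonneg x) n)
  nlinarith

lemma pos_of_eq_zero_of_deriv_pos {g : ℝ → ℝ} {a b : ℝ} (hab : a < b)
    (hg : ContinuousOn g (Icc a b)) (ha : g a = 0) (hderiv : ∀ x ∈ Ioo a b, 0 < deriv g x) :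
    ∀ x ∈ Ioc a b, 0 < g x := by
  have hmono : StrictMonoOn g (Icc a b) :=
    strictMonoOn_of_deriv_pos (convex_Icc a b) hg (by rwa [interior_Icc])
  intro x hx
  simpa [ha] using hmono (left_mem_Icc.2 hab.le) (Ioc_subset_Icc_self hx) hx.1

lemma iteratedDerivWithin_pos_of_succ_pos {F : ℝ → ℝ} {a b c : ℝ} {k j : ℕ}
    (hF : ContDiffOn ℝ k F (Icc a c)) (hab : a < b) (hbc : b ≤ c) (hj : j ≤ k)
    (ha : iteratedDerivWithin j F (Icc a c) a = 0)
    (hsucc : ∀ x ∈ Ioo a b, 0 < iteratedDerivWithin (j + 1) F (Icc a c) x) :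
    ∀ x ∈ Ioc a b, 0 < iteratedDerivWithin j F (Icc a c) x := by
  have hsub : Icc a b ⊆ Icc a c := Icc_subset_Icc le_rfl hbc
  refine pos_of_eq_zero_of_deriv_pos hab ?_ ha fun x hx ↦ ?_
  · exact (hF.continuousOn_iteratedDerivWithin (by exact_mod_cast hj)
      (uniqueDiffOn_Icc (hab.trans_le hbc))).mono hsub
  · rw [← derivWithin_of_mem_nhds (Icc_mem_nhds hx.1 (hx.2.trans_le hbc)),
      ← iteratedDerivWithin_succ]
    exact hsucc x hx

lemma iteratedDerivWithin_pos_of_top_pos {F : ℝ → ℝ} {a b c : ℝ} {k : ℕ}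
    (hF : ContDiffOn ℝ k F (Icc a c)) (hab : a < b) (hbc : b ≤ c)
    (ha : ∀ j ≤ k, iteratedDerivWithin j F (Icc a c) a = 0)
    (htop : ∀ x ∈ Ioo a b, 0 < iteratedDerivWithin (k + 1) F (Icc a c) x) {j : ℕ} (hj : j ≤ k) :
    ∀ x ∈ Ioc a b, 0 < iteratedDerivWithin j F (Icc a c) x := by
  induction hj using Nat.decreasingInduction with
  | self => exact iteratedDerivWithin_pos_of_succ_pos hF hab hbc le_rfl (ha k le_rfl) htop
  | of_succ j hjk ih =>
    exact iteratedDerivWithin_pos_of_succ_pos hF hab hbc hjk.le (ha j hjk.le)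
      fun x hx ↦ ih x (Ioo_subset_Ioc_self hx)

lemma deriv_zero_of_even {F : ℝ → ℝ} (heven : ∀ y, F (-y) = F y) : deriv F 0 = 0 := by
  have h := deriv_comp_neg (f := F) (x := 0)
  rw [funext heven, neg_zero] at h
  linarith

theorem stmt13_general (y₀ β n m : ℝ) (hy₀ : 0 < y₀) (hβ : 0 < β) :
    ¬ ∃ F : ℝ → ℝ,
      (∀ y : ℝ, F (-y) = F y) ∧
      ContDiffOn ℝ 4 F (Icc (-y₀) y₀) ∧
      (∀ y ∈ Ioo (-y₀) y₀, 0 < F y) ∧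
      (∀ j ≤ 4, iteratedDerivWithin j F (Icc (-y₀) y₀) y₀ = 0) ∧
      (∀ j ≤ 4, iteratedDerivWithin j F (Icc (-y₀) y₀) (-y₀) = 0) ∧
      (∀ y ∈ Ioo (-y₀) y₀,
        |F y| ^ m * |iteratedDerivWithin 5 F (Icc (-y₀) y₀) y| ^ n *
          iteratedDerivWithin 5 F (Icc (-y₀) y₀) y + β * F y * y = 0) := by
  rintro ⟨F, heven, hF, hpos, -, hzero, heq⟩
  have hneg : -y₀ < 0 := neg_neg_of_pos hy₀
  have hfifth : ∀ x ∈ Ioo (-y₀) 0, 0 < iteratedDerivWithin 5 F (Icc (-y₀) y₀) x := by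
    intro x hx
    have hx' : x ∈ Ioo (-y₀) y₀ := ⟨hx.1, hx.2.trans hy₀⟩
    have hforce : 0 < β * F x * -x := mul_pos (mul_pos hβ (hpos x hx')) (neg_pos.2 hx.2)
    exact pos_of_mul_rpow_abs_mul_pos (n := n) (Real.rpow_nonneg (abs_nonneg (F x)) m)
      (by linarith [heq x hx'])
  have hfirst := iteratedDerivWithin_pos_of_top_pos hF hneg hy₀.le hzero hfifth
    (j := 1) (by norm_num) 0 (right_mem_Ioc.2 hneg)
  rw [iteratedDerivWithin_one, derivWithin_of_mem_nhds (Icc_mem_nhds hneg hy₀),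
    deriv_zero_of_even heven] at hfirst
  exact lt_irrefl 0 hfirst

/-- Nonexistence of symmetric positive compactly supported source-type
profiles: there is no even `C⁴` function `F` on `[-y₀,y₀]`, positive on
`(-y₀,y₀)`, vanishing with its first four derivatives at `±y₀`, satisfying
`|F|^m |F⁽⁵⁾|^n F⁽⁵⁾ + β F y = 0` on `(-y₀,y₀)` with `β > 0`, `n ≥ 0`. -/
theorem stmt13 (y₀ β n m : ℝ) (hy₀ : 0 < y₀) (hβ : 0 < β) (hn : 0 ≤ n) :
    ¬ ∃ F : ℝ → ℝ,
      (∀ y : ℝ, F (-y) = F y) ∧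
      ContDiffOn ℝ 4 F (Icc (-y₀) y₀) ∧
      (∀ y ∈ Ioo (-y₀) y₀, 0 < F y) ∧
      (∀ j ≤ 4, iteratedDerivWithin j F (Icc (-y₀) y₀) y₀ = 0) ∧
      (∀ j ≤ 4, iteratedDerivWithin j F (Icc (-y₀) y₀) (-y₀) = 0) ∧
      (∀ y ∈ Ioo (-y₀) y₀,
        |F y| ^ m * |iteratedDerivWithin 5 F (Icc (-y₀) y₀) y| ^ n *
          iteratedDerivWithin 5 F (Icc (-y₀) y₀) y + β * F y * y = 0) :=
  stmt13_general y₀ β n m hy₀ hβ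
end

section
/- Define f₀ on [-1,0] by f₀(y) = y(y+1)(a + by + cy² + y³), where (a,b,c,G) solves the system: (1-G⁴)a + G⁴b - G⁴c = -G⁴; (1+G³)a + (1-2G³)b + 3G³c = 4G³; (1+G²)b + (1-3G²)c = -6G²; (1+G)c = 4G-1. Then f₀⁽⁵⁾(y) = 5! on (-1,0), f₀(-1) = f₀(0) = 0, and the extension of f₀ to (0, G] by f₀(y) = -G⁵ f₀(y/G - 1) satisfies f₀⁽⁵⁾ = -5! there and matches f₀ at y = 0 up to fourth derivatives: the jumps [f₀'](0), [f₀''](0), [f₀'''](0), [f₀⁽⁴⁾](0) all vanish. -/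
/-!
Both `f₀` and its extension `g` are quintic polynomials, so all five derivatives are explicit.
By the chain rule for the affine change of variables, `g⁽ʲ⁾(0) = -G⁵ G⁻ʲ f₀⁽ʲ⁾(-1)`; hence
`C⁴` matching at `0` means `f₀⁽ʲ⁾(0) = -G⁵⁻ʲ f₀⁽ʲ⁾(-1)` for `j = 1, …, 4`, and this is
exactly `j!` times the `j`-th equation of the system.
-/

open Set Polynomial

theorem Polynomial.iteratedDeriv_eval {𝕜 : Type*} [NontriviallyNormedField 𝕜] (p : 𝕜[X])
    (n : ℕ) : iteratedDeriv n (fun x => p.eval x) = fun x => (derivative^[n] p).eval x := by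
  induction n generalizing p with
  | zero => rfl
  | succ n ih =>
    have hderiv : _root_.deriv (fun x => p.eval x) = fun x => p.derivative.eval x := by
      ext x; exact p.deriv
    rw [iteratedDeriv_succ', hderiv, ih, Function.iterate_succ_apply]

theorem iteratedDeriv_comp_const_mul_sub_const {𝕜 : Type*} [NontriviallyNormedField 𝕜] {n : ℕ}
    {f : 𝕜 → 𝕜} (hf : ContDiff 𝕜 n f) (c s : 𝕜) :
    iteratedDeriv n (fun x => f (c * x - s)) = fun x => c ^ n * iteratedDeriv n f (c * x - s) := by
  rw [iteratedDeriv_comp_const_mul (f := fun x => f (x - s))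
    (hf.comp (contDiff_id.sub contDiff_const)), iteratedDeriv_comp_sub_const]

/-- The hump `f₀` on `[-1, 0]`. -/
noncomputable def hump (a b c : ℝ) : ℝ[X] :=
  X * (X + 1) * (C a + C b * X + C c * X ^ 2 + X ^ 3)

theorem eval_iterate_derivative_five_hump (a b c x : ℝ) :
    (derivative^[5] (hump a b c)).eval x = 120 := by
  simp [hump, Function.iterate_succ_apply', derivative_mul]
  ring

theorem hump_iterate_derivative_matching {a b c G : ℝ}
    (h1 : (1 - G ^ 4) * a + G ^ 4 * b - G ^ 4 * c = -G ^ 4)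
    (h2 : (1 + G ^ 3) * a + (1 - 2 * G ^ 3) * b + 3 * G ^ 3 * c = 4 * G ^ 3)
    (h3 : (1 + G ^ 2) * b + (1 - 3 * G ^ 2) * c = -6 * G ^ 2)
    (h4 : (1 + G) * c = 4 * G - 1) {j : ℕ} (hj : j ∈ Icc 1 4) :
    (derivative^[j] (hump a b c)).eval 0 =
      -G ^ (5 - j) * (derivative^[j] (hump a b c)).eval (-1) := by
  obtain ⟨hj1, hj4⟩ := hj
  interval_cases j <;> simp [hump, Function.iterate_succ_apply', derivative_mul]
  · linear_combination h1
  · linear_combination 2 * h2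
  · linear_combination 6 * h3
  · linear_combination 24 * h4

/-- Algebraic construction for `m = 1`: if `(a,b,c,G)` solves the matching
system (S), then `f₀(y) = y(y+1)(a+by+cy²+y³)` satisfies `f₀⁽⁵⁾ = 5!`,
vanishes at `-1` and `0`, and its extension `g(y) = -G⁵ f₀(y/G - 1)`
satisfies `g⁽⁵⁾ = -5!` and matches `f₀` at `y = 0` up to fourth
derivatives. -/
theorem stmt14 (a b c G : ℝ) (hG : G ∈ Ioo (0 : ℝ) 1)
    (h1 : (1 - G ^ 4) * a + G ^ 4 * b - G ^ 4 * c = -G ^ 4)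
    (h2 : (1 + G ^ 3) * a + (1 - 2 * G ^ 3) * b + 3 * G ^ 3 * c = 4 * G ^ 3)
    (h3 : (1 + G ^ 2) * b + (1 - 3 * G ^ 2) * c = -6 * G ^ 2)
    (h4 : (1 + G) * c = 4 * G - 1)
    (f₀ g : ℝ → ℝ)
    (hf₀ : ∀ y : ℝ, f₀ y = y * (y + 1) * (a + b * y + c * y ^ 2 + y ^ 3))
    (hg : ∀ y : ℝ, g y = -G ^ 5 * f₀ (y / G - 1)) :
    (∀ y : ℝ, iteratedDeriv 5 f₀ y = 120) ∧
    f₀ (-1) = 0 ∧ f₀ 0 = 0 ∧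
    (∀ y : ℝ, iteratedDeriv 5 g y = -120) ∧
    (∀ j : Fin 5, 1 ≤ (j : ℕ) → iteratedDeriv j g 0 = iteratedDeriv j f₀ 0) := by
  have hG0 : G ≠ 0 := hG.1.ne'
  have hf : f₀ = fun y => (hump a b c).eval y := funext fun y => by simp [hf₀, hump]
  have hf_deriv (n : ℕ) (y : ℝ) :
      iteratedDeriv n f₀ y = (derivative^[n] (hump a b c)).eval y := by
    rw [hf, Polynomial.iteratedDeriv_eval]
  have hg_deriv (n : ℕ) (y : ℝ) : iteratedDeriv n g y =
      -G ^ 5 * (G⁻¹ ^ n * (derivative^[n] (hump a b c)).eval (G⁻¹ * y - 1)) := by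
    have hg' : g = fun y => -G ^ 5 * (hump a b c).eval (G⁻¹ * y - 1) :=
      funext fun y => by rw [hg, hf, inv_mul_eq_div]
    have hP : ContDiff ℝ n fun x => (hump a b c).eval x := by
      simpa using (hump a b c).contDiff_aeval (𝕜 := ℝ) n
    rw [hg', iteratedDeriv_const_mul_field, iteratedDeriv_comp_const_mul_sub_const hP,
      Polynomial.iteratedDeriv_eval]
  refine ⟨fun y => ?_, by simp [hf₀], by simp [hf₀], fun y => ?_, ?_⟩
  · rw [hf_deriv, eval_iterate_derivative_five_hump]
  · rw [hg_deriv, eval_iterate_derivative_five_hump]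
    field_simp
  · rintro ⟨j, hj5⟩ hj1
    rw [hg_deriv, hf_deriv, hump_iterate_derivative_matching h1 h2 h3 h4 ⟨hj1, by omega⟩,
      mul_zero, zero_sub, inv_pow, pow_sub₀ G hG0 (by omega : j ≤ 5)]
    ring
end

section
/- Let D(G) be the determinant of the 4×4 matrix with rows (1-G⁴, G⁴, -G⁴, -G⁴), (1+G³, 1-2G³, 3G³, 4G³), (0, 1+G², 1-3G², -6G²), (0, 0, 1+G, 4G-1). Then D(0) < 0 and D(1) < 0, and D has exactly two roots in (0,1): one G₁ ∈ (0.178, 0.179) and one G₂ ∈ (0.706, 0.707). -/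
/-!
`D` factors as `-(G + 1)² · R(G)` with `R` an octic. On `[0, 0.45]` the derivative `R'` is
negative, on `[0.45, 0.5]` `R` itself is negative, and on `[0.5, 1]` `R'` is positive, so `R`
has at most one root on each side of `[0.45, 0.5]`; sign changes of `R` across
`(0.178, 0.179)` and `(0.706, 0.707)` produce them.
-/

open Set Matrix

/-- The determinant of the matching matrix of system (S). -/
noncomputable def Dmat (G : ℝ) : ℝ :=
  Matrix.det !![1 - G ^ 4, G ^ 4, -G ^ 4, -G ^ 4;
    1 + G ^ 3, 1 - 2 * G ^ 3, 3 * G ^ 3, 4 * G ^ 3;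
    0, 1 + G ^ 2, 1 - 3 * G ^ 2, -6 * G ^ 2;
    0, 0, 1 + G, 4 * G - 1]

noncomputable def matchingOctic (G : ℝ) : ℝ :=
  G ^ 8 - 6 * G ^ 7 + 2 * G ^ 6 - G ^ 5 + 12 * G ^ 4 - G ^ 3 + 2 * G ^ 2 - 6 * G + 1

noncomputable def matchingOctic' (G : ℝ) : ℝ :=
  8 * G ^ 7 - 42 * G ^ 6 + 12 * G ^ 5 - 5 * G ^ 4 + 48 * G ^ 3 - 3 * G ^ 2 + 4 * G - 6

lemma Dmat_eq_neg_sq_mul_matchingOctic (G : ℝ) : Dmat G = -(G + 1) ^ 2 * matchingOctic G := by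
  simp [Dmat, matchingOctic, Matrix.det_succ_row_zero, Fin.sum_univ_succ, Fin.succAbove]
  ring

lemma Dmat_eq_zero_iff {G : ℝ} (hG : G ≠ -1) : Dmat G = 0 ↔ matchingOctic G = 0 := by
  have hG' : -(G + 1) ^ 2 ≠ 0 := neg_ne_zero.2 (pow_ne_zero 2 fun h => hG (by linarith))
  rw [Dmat_eq_neg_sq_mul_matchingOctic, mul_eq_zero, or_iff_right hG']

lemma hasDerivAt_matchingOctic (x : ℝ) : HasDerivAt matchingOctic (matchingOctic' x) x := by
  have h := ((((((((hasDerivAt_pow 8 x).sub ((hasDerivAt_pow 7 x).const_mul 6)).add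
    ((hasDerivAt_pow 6 x).const_mul 2)).sub (hasDerivAt_pow 5 x)).add
    ((hasDerivAt_pow 4 x).const_mul 12)).sub (hasDerivAt_pow 3 x)).add
    ((hasDerivAt_pow 2 x).const_mul 2)).sub ((hasDerivAt_id x).const_mul 6)).add_const 1
  exact h.congr_deriv (by norm_num [matchingOctic']; ring)

lemma continuous_matchingOctic : Continuous matchingOctic := by
  unfold matchingOctic; fun_prop

lemma matchingOctic'_neg_of_mem_Icc {x : ℝ} (hx : x ∈ Icc (0 : ℝ) 0.45) :
    matchingOctic' x < 0 := by
  obtain ⟨h0, h1⟩ := hx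
  unfold matchingOctic'
  nlinarith [sq_nonneg x, sq_nonneg (x - 0.45), pow_le_pow_left₀ h0 h1 2,
    pow_le_pow_left₀ h0 h1 3, pow_le_pow_left₀ h0 h1 5, pow_le_pow_left₀ h0 h1 7,
    mul_nonneg h0 h0, mul_nonneg (mul_nonneg h0 h0) h0, sq_nonneg (x ^ 3), sq_nonneg (x ^ 2 - x)]

lemma matchingOctic_neg_of_mem_Icc {x : ℝ} (hx : x ∈ Icc (0.45 : ℝ) 0.5) :
    matchingOctic x < 0 := by
  obtain ⟨h0, h1⟩ := hx
  unfold matchingOctic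
  nlinarith [sq_nonneg (x - 0.45), sq_nonneg (x - 0.5), sq_nonneg x,
    mul_nonneg (sub_nonneg.2 h0) (sub_nonneg.2 h1), sq_nonneg (x ^ 2), sq_nonneg (x ^ 3),
    sq_nonneg (x ^ 4)]

lemma matchingOctic'_pos_of_mem_Icc {x : ℝ} (hx : x ∈ Icc (0.5 : ℝ) 1) :
    0 < matchingOctic' x := by
  obtain ⟨h0, h1⟩ := hx
  unfold matchingOctic'
  nlinarith [sq_nonneg (x - 0.5), sq_nonneg (x - 1), sq_nonneg (x - 0.7),
    mul_nonneg (sub_nonneg.2 h0) (sub_nonneg.2 h1), sq_nonneg (x ^ 2 - x), sq_nonneg (x ^ 3 - x ^ 2)]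

lemma strictAntiOn_matchingOctic : StrictAntiOn matchingOctic (Icc (0 : ℝ) 0.45) := by
  refine strictAntiOn_of_deriv_neg (convex_Icc _ _) continuous_matchingOctic.continuousOn ?_
  intro x hx
  rw [interior_Icc] at hx
  rw [(hasDerivAt_matchingOctic x).deriv]
  exact matchingOctic'_neg_of_mem_Icc (Ioo_subset_Icc_self hx)

lemma strictMonoOn_matchingOctic : StrictMonoOn matchingOctic (Icc (0.5 : ℝ) 1) := by
  refine strictMonoOn_of_deriv_pos (convex_Icc _ _) continuous_matchingOctic.continuousOn ?_
  intro x hx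
  rw [interior_Icc] at hx
  rw [(hasDerivAt_matchingOctic x).deriv]
  exact matchingOctic'_pos_of_mem_Icc (Ioo_subset_Icc_self hx)

/-- `D(0) < 0`, `D(1) < 0`, and `D` has exactly two roots in `(0,1)`:
`G₁ ∈ (0.178, 0.179)` and `G₂ ∈ (0.706, 0.707)`. -/
theorem stmt15 :
    Dmat 0 < 0 ∧ Dmat 1 < 0 ∧
    ∃ G₁ ∈ Ioo (0.178 : ℝ) 0.179, ∃ G₂ ∈ Ioo (0.706 : ℝ) 0.707,
      Dmat G₁ = 0 ∧ Dmat G₂ = 0 ∧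
      ∀ G ∈ Ioo (0 : ℝ) 1, Dmat G = 0 → G = G₁ ∨ G = G₂ := by
  obtain ⟨G₁, hG₁, hroot₁⟩ : ∃ G₁ ∈ Ioo (0.178 : ℝ) 0.179, matchingOctic G₁ = 0 :=
    intermediate_value_Ioo' (by norm_num) continuous_matchingOctic.continuousOn
      ⟨by norm_num [matchingOctic], by norm_num [matchingOctic]⟩
  obtain ⟨G₂, hG₂, hroot₂⟩ : ∃ G₂ ∈ Ioo (0.706 : ℝ) 0.707, matchingOctic G₂ = 0 :=
    intermediate_value_Ioo (by norm_num) continuous_matchingOctic.continuousOn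
      ⟨by norm_num [matchingOctic], by norm_num [matchingOctic]⟩
  have root_iff {G : ℝ} (hG : 0 < G) : Dmat G = 0 ↔ matchingOctic G = 0 :=
    Dmat_eq_zero_iff (by linarith)
  refine ⟨by norm_num [Dmat_eq_neg_sq_mul_matchingOctic, matchingOctic],
    by norm_num [Dmat_eq_neg_sq_mul_matchingOctic, matchingOctic], G₁, hG₁, G₂, hG₂,
    (root_iff (by linarith [hG₁.1])).2 hroot₁, (root_iff (by linarith [hG₂.1])).2 hroot₂, ?_⟩
  intro G hG hD
  have hroot := (root_iff hG.1).1 hD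
  rcases le_or_gt G 0.45 with hsmall | hlarge
  · exact .inl <| strictAntiOn_matchingOctic.injOn ⟨hG.1.le, hsmall⟩
      ⟨by linarith [hG₁.1], by linarith [hG₁.2]⟩ (hroot.trans hroot₁.symm)
  · have hhalf : 0.5 < G := lt_of_not_ge fun h =>
      (matchingOctic_neg_of_mem_Icc ⟨hlarge.le, h⟩).ne hroot
    exact .inr <| strictMonoOn_matchingOctic.injOn ⟨hhalf.le, hG.2.le⟩
      ⟨by linarith [hG₂.1], by linarith [hG₂.2]⟩ (hroot.trans hroot₂.symm)
end

section
/- Let G ∈ (0,1) satisfy the matching system (S) with solution (a,b,c), and suppose a < 0 (equivalently, by the first equation, 1 + b - c > 0). Then 3G² - 10G + 3 > 0, i.e. G < 1/3. Consequently, of the two roots G₁ ≈ 0.1783 and G₂ ≈ 0.7060 of D(G) in (0,1), only G₁ is compatible with positivity of f₀ on (-1,0). -/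
open Set

/-- Selection of the admissible root: if `G ∈ (0,1)` and `(a,b,c)` solves
the matching system (S) with `a < 0`, then `1 + b - c > 0`,
`3G² - 10G + 3 > 0`, hence `G < 1/3`; in particular `G ∉ (0.706, 0.707)`,
so only the root `G₁ ≈ 0.1783` is compatible with positivity of `f₀` on
`(-1,0)`. -/
theorem stmt16 (a b c G : ℝ) (hG : G ∈ Ioo (0 : ℝ) 1)
    (h1 : (1 - G ^ 4) * a + G ^ 4 * b - G ^ 4 * c = -G ^ 4)
    (h2 : (1 + G ^ 3) * a + (1 - 2 * G ^ 3) * b + 3 * G ^ 3 * c = 4 * G ^ 3)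
    (h3 : (1 + G ^ 2) * b + (1 - 3 * G ^ 2) * c = -6 * G ^ 2)
    (h4 : (1 + G) * c = 4 * G - 1)
    (ha : a < 0) :
    0 < 1 + b - c ∧ 0 < 3 * G ^ 2 - 10 * G + 3 ∧ G < 1 / 3 ∧
      ¬ (0.706 < G ∧ G < 0.707) := by
  obtain ⟨hG0, hG1⟩ := hG
  have hG4 : (0:ℝ) < G ^ 4 := by positivity
  have hG4' : G ^ 4 < 1 := pow_lt_one₀ hG0.le hG1 (by norm_num)
  -- from h1 : (1 - G^4) * a = -G^4 * (1 + b - c)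
  have heq : (1 - G ^ 4) * a = -(G ^ 4) * (1 + b - c) := by linarith
  have hbc : 0 < 1 + b - c := by
    by_contra h
    push_neg at h
    nlinarith [mul_neg_of_pos_of_neg (by linarith : (0:ℝ) < 1 - G ^ 4) ha]
  have hkey : (1 + b - c) * ((1 + G) * (1 + G ^ 2)) =
      (1 + G) * (3 * G ^ 2 - 10 * G + 3) := by
    linear_combination (1 + G) * h3 + (2 * G ^ 2 - 2) * h4
  have hquad : 0 < 3 * G ^ 2 - 10 * G + 3 := by
    have h1G : (0:ℝ) < 1 + G := by linarith
    nlinarith [mul_pos hbc (mul_pos h1G (by positivity : (0:ℝ) < 1 + G ^ 2))]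
  have hlt : G < 1 / 3 := by nlinarith
  exact ⟨hbc, hquad, hlt, fun h => by linarith [h.1]⟩
end

section
/- Let G ∈ (0,1) and suppose f₀ : [-1, y₀) → ℝ, with y₀ = Σ_{n≥1} G^n = G/(1-G) the right interface, satisfies the self-similarity relation f₀(y) = -G⁵ f₀(y/G - 1) for y in each successive interval of the geometric construction. Define φ*(s) = e^{-5s} f₀(y₀ - e^s) for s < ln(y₀+1). Then φ*(s + ln G) = -φ*(s) for all such s, and hence φ* is periodic with period 2|ln G|. -/
open Set Real

/-- Anti-periodicity of the oscillatory component of the explicit `m = 1`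
travelling wave: if `f₀` satisfies the self-similarity relation
`f₀(y) = -G⁵ f₀(y/G - 1)` on `(0, y₀)`, `y₀ = G/(1-G)`, then
`φ*(s) = e^{-5s} f₀(y₀ - e^s)` satisfies `φ*(s + ln G) = -φ*(s)` for all
`s < ln(y₀+1)`, and hence `φ*(s + 2 ln G) = φ*(s)` (period `2|ln G|`). -/
theorem stmt17 (G y₀ : ℝ) (f₀ : ℝ → ℝ) (φstar : ℝ → ℝ)
    (hG : G ∈ Ioo (0 : ℝ) 1) (hy₀ : y₀ = G / (1 - G))
    (hrel : ∀ y ∈ Ioo (0 : ℝ) y₀, f₀ y = -G ^ 5 * f₀ (y / G - 1))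
    (hφ : ∀ s : ℝ, φstar s = Real.exp (-5 * s) * f₀ (y₀ - Real.exp s)) :
    ∀ s : ℝ, s < Real.log (y₀ + 1) →
      φstar (s + Real.log G) = -φstar s ∧
      φstar (s + 2 * Real.log G) = φstar s := by
  obtain ⟨hG0, hG1⟩ := hG
  have h1G : (0:ℝ) < 1 - G := by linarith
  have hGy : y₀ = G * (y₀ + 1) := by rw [hy₀]; field_simp; ring
  have hy0pos : (0:ℝ) < y₀ + 1 := by
    have : (0:ℝ) < G / (1 - G) := by positivity
    rw [hy₀]; linarith
  have hlogG : Real.log G < 0 := Real.log_neg hG0 hG1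
  have hexp5 : Real.exp (5 * Real.log G) = G ^ 5 := by
    rw [show (5:ℝ) * Real.log G = (5:ℕ) * Real.log G by norm_num,
      Real.exp_nat_mul, Real.exp_log hG0]
  have key : ∀ s : ℝ, s < Real.log (y₀ + 1) →
      φstar (s + Real.log G) = -φstar s := by
    intro s hs
    have hes : Real.exp s < y₀ + 1 := by
      have := Real.exp_lt_exp.mpr hs
      rwa [Real.exp_log hy0pos] at this
    have hmem : y₀ - G * Real.exp s ∈ Ioo (0:ℝ) y₀ := by
      constructor
      · have : G * Real.exp s < G * (y₀ + 1) := mul_lt_mul_of_pos_left hes hG0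
        linarith [hGy]
      · nlinarith [Real.exp_pos s]
    have harg : (y₀ - G * Real.exp s) / G - 1 = y₀ - Real.exp s := by
      field_simp
      linarith [hGy]
    have hrel' := hrel _ hmem
    rw [harg] at hrel'
    have hexpadd : Real.exp (s + Real.log G) = Real.exp s * G := by
      rw [Real.exp_add, Real.exp_log hG0]
    rw [hφ, hφ, hexpadd, show y₀ - Real.exp s * G = y₀ - G * Real.exp s by ring,
      hrel', show -5 * (s + Real.log G) = -5 * s + -(5 * Real.log G) by ring,
      Real.exp_add, Real.exp_neg, hexp5]
    have hG5 : G ^ 5 ≠ 0 := by positivity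
    field_simp
  intro s hs
  have h1 := key s hs
  have h2 := key (s + Real.log G) (by linarith)
  refine ⟨h1, ?_⟩
  rw [show s + 2 * Real.log G = s + Real.log G + Real.log G by ring, h2, h1, neg_neg]
end
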